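/- An integral domain D is a ∗-Prüfer domain if and only if for all nonzero fractional ideals A and nonzero finitely generated fractional ideals F with A ⊆ F^∗, there exists a nonzero fractional ideal B with A^∗ = (BF)^∗. -/

import Mathlib

open FractionalIdeal

/-- A star operation on an integral domain `D` with fraction field `K`, acting on
fractional ideals: it fixes `D`, is extensive, monotone, idempotent (all on nonzero
ideals), and commutes with multiplication by nonzero principal fractional ideals. -/
structure StarOp (D : Type*) [CommRing D] [IsDomain D] (K : Type*) [Field K]
    [Algebra D K] [IsFractionRing D K] where
  star : FractionalIdeal (nonZeroDivisors D) K → FractionalIdeal (nonZeroDivisors D) K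
  star_one : star 1 = 1
  le_star : ∀ {A}, A ≠ 0 → A ≤ star A
  star_mono : ∀ {A B}, A ≠ 0 → A ≤ B → star A ≤ star B
  star_idem : ∀ {A}, A ≠ 0 → star (star A) = star A
  star_smul : ∀ {A : FractionalIdeal (nonZeroDivisors D) K} (x : K), x ≠ 0 → A ≠ 0 →
    star (spanSingleton (nonZeroDivisors D) x * A) = spanSingleton (nonZeroDivisors D) x * star A

variable {D K : Type*} [CommRing D] [IsDomain D] [Field K] [Algebra D K] [IsFractionRing D K]

/-!
If `D` is `∗`-Prüfer and `A ⊆ F^∗`, then `B = AF⁻¹` works, since `(AF⁻¹F)^∗ = (A (FF⁻¹)^∗)^∗ = A^∗`.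
Conversely, pick `0 ≠ x ∈ F` and factor `(x)^∗ = (x) = (BF)^∗`. Then `x⁻¹B ⊆ F⁻¹`, so
`D = x⁻¹ (BF)^∗ = (x⁻¹BF)^∗ ⊆ (F⁻¹F)^∗ ⊆ D`.
-/

namespace FractionalIdeal

instance : NoZeroDivisors (FractionalIdeal (nonZeroDivisors D) K) where
  eq_zero_or_eq_zero_of_mul_eq_zero {A B} h := by
    simpa only [← coeToSubmodule_eq_bot, coe_mul, Submodule.mul_eq_bot] using h

theorem mul_inv_ne_zero {F : FractionalIdeal (nonZeroDivisors D) K} (hF : F ≠ 0) :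
    F * F⁻¹ ≠ 0 :=
  (bot_lt_mul_inv hF).ne'

theorem inv_ne_zero_of_ne_zero {F : FractionalIdeal (nonZeroDivisors D) K} (hF : F ≠ 0) :
    F⁻¹ ≠ 0 :=
  right_ne_zero_of_mul (mul_inv_ne_zero hF)

end FractionalIdeal

namespace StarOp

variable (s : StarOp D K) {A B F : FractionalIdeal (nonZeroDivisors D) K}

theorem star_ne_zero (hA : A ≠ 0) : s.star A ≠ 0 :=
  ne_bot_of_le_ne_bot hA (s.le_star hA)

theorem star_spanSingleton {x : K} (hx : x ≠ 0) :
    s.star (spanSingleton (nonZeroDivisors D) x) = spanSingleton (nonZeroDivisors D) x := by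
  simpa only [mul_one, s.star_one] using s.star_smul (A := 1) x hx one_ne_zero

theorem mul_star_le_star_mul (hA : A ≠ 0) : B * s.star A ≤ s.star (B * A) := by
  rw [mul_le]
  intro b hb a ha
  by_cases hb0 : b = 0
  · simp only [hb0, zero_mul, FractionalIdeal.zero_mem]
  have hbA : spanSingleton (nonZeroDivisors D) b * A ≤ B * A :=
    mul_le_mul_left (spanSingleton_le_iff_mem.mpr hb) A
  have hbA_ne : spanSingleton (nonZeroDivisors D) b * A ≠ 0 :=
    mul_ne_zero (spanSingleton_ne_zero_iff.mpr hb0) hA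
  apply s.star_mono hbA_ne hbA
  rw [s.star_smul b hb0 hA]
  exact mul_mem_mul (mem_spanSingleton_self _ b) ha

theorem star_mul_star (hA : A ≠ 0) (hB : B ≠ 0) : s.star (B * s.star A) = s.star (B * A) := by
  refine le_antisymm ?_ (s.star_mono (mul_ne_zero hB hA) (mul_le_mul_right (s.le_star hA) B))
  calc s.star (B * s.star A)
      ≤ s.star (s.star (B * A)) :=
        s.star_mono (mul_ne_zero hB (s.star_ne_zero hA)) (s.mul_star_le_star_mul hA)
    _ = s.star (B * A) := s.star_idem (mul_ne_zero hB hA)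

theorem star_mul_inv_le_one (hF : F ≠ 0) : s.star (F * F⁻¹) ≤ 1 :=
  s.star_one ▸ s.star_mono (mul_inv_ne_zero hF) mul_one_div_le_one

theorem star_mul_inv_eq_one_of_star_mul_eq_spanSingleton (hB : B ≠ 0) (hF : F ≠ 0) {x : K}
    (hx : x ≠ 0) (hBF : s.star (B * F) = spanSingleton (nonZeroDivisors D) x) :
    s.star (F * F⁻¹) = 1 := by
  set y := spanSingleton (nonZeroDivisors D) x⁻¹
  have hy : y ≠ 0 := spanSingleton_ne_zero_iff.mpr (inv_ne_zero hx)
  have hyx : y * spanSingleton (nonZeroDivisors D) x = 1 := by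
    rw [spanSingleton_mul_spanSingleton, inv_mul_cancel₀ hx, spanSingleton_one]
  have hyB : y * B ≤ F⁻¹ := by
    rw [inv_eq, le_div_iff_mul_le hF, mul_assoc, ← hyx, ← hBF]
    exact mul_le_mul_right (s.le_star (mul_ne_zero hB hF)) y
  refine le_antisymm (s.star_mul_inv_le_one hF) ?_
  calc 1 = y * s.star (B * F) := by rw [hBF, hyx]
    _ = s.star (y * B * F) := by rw [mul_assoc, s.star_smul _ (inv_ne_zero hx) (mul_ne_zero hB hF)]
    _ ≤ s.star (F * F⁻¹) := by
      rw [mul_comm F]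
      exact s.star_mono (mul_ne_zero (mul_ne_zero hy hB) hF) (mul_le_mul_left hyB F)

end StarOp

/-- `D` is a `∗`-Prüfer domain iff whenever `A ⊆ F^∗` with `F` nonzero finitely
generated and `A` nonzero, `A^∗ = (BF)^∗` for some nonzero fractional ideal `B`. -/
theorem starPrufer_iff_factor (s : StarOp D K) :
    (∀ F : FractionalIdeal (nonZeroDivisors D) K, F ≠ 0 → (F : Submodule D K).FG → s.star (F * F⁻¹) = 1) ↔
    (∀ (A F : FractionalIdeal (nonZeroDivisors D) K), A ≠ 0 → F ≠ 0 → (F : Submodule D K).FG → A ≤ s.star F →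
      ∃ B : FractionalIdeal (nonZeroDivisors D) K, B ≠ 0 ∧ s.star A = s.star (B * F)) := by
  constructor
  · intro hPrufer A F hA hF hFG _
    refine ⟨A * F⁻¹, mul_ne_zero hA (inv_ne_zero_of_ne_zero hF), ?_⟩
    rw [mul_assoc, mul_comm F⁻¹, ← s.star_mul_star (mul_inv_ne_zero hF) hA, hPrufer F hF hFG,
      mul_one]
  · intro hFactor F hF hFG
    obtain ⟨x, hxF, hx⟩ := Submodule.exists_mem_ne_zero_of_ne_bot (coeToSubmodule_ne_bot.mpr hF)
    have hxle : spanSingleton (nonZeroDivisors D) x ≤ s.star F :=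
      (spanSingleton_le_iff_mem.mpr hxF).trans (s.le_star hF)
    obtain ⟨B, hB, hBF⟩ := hFactor _ F (spanSingleton_ne_zero_iff.mpr hx) hF hFG hxle
    rw [s.star_spanSingleton hx] at hBF
    exact s.star_mul_inv_eq_one_of_star_mul_eq_spanSingleton hB hF hx hBF.symm
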